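/- arXiv:2405.08608 — 3 statements merged into one kernel-verified Lean document; each statement's English description precedes it below -/
import Mathlib

section
/- Let p ≡ 1 (mod 4) be a prime. Then Φ_p·Φ_p* = 2·I, where Φ_p* denotes the conjugate transpose of the Paley ETF Φ_p and I is the identity matrix of size (p+1)/2; that is, Φ_p is a tight frame with frame constant 2. -/
open scoped Classical
open Finset

noncomputable section

/-- The quadratic character `χ` of `F_p`: `χ 0 = 0`, `χ x = 1` if `x` is a nonzero square,
and `χ x = -1` otherwise. -/
def quadChar (p : ℕ) (x : ZMod p) : ℤ :=
  if x = 0 then 0 else if IsSquare x then 1 else -1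

/-- The canonical additive character `ψ` of `F_p`, `ψ x = exp(2πi·x/p)`. -/
def addChar' (p : ℕ) (x : ZMod p) : ℂ :=
  Complex.exp (2 * Real.pi * Complex.I * (x.val : ℂ) / (p : ℂ))

/-- The set of quadratic residues mod `p` (nonzero squares), as a type. -/
abbrev QRes (p : ℕ) : Type := {b : ZMod p // b ≠ 0 ∧ IsSquare b}

/-- The Paley ETF: rows indexed by `{0} ∪ Q_p` (with `none` the `0`-row),
columns indexed by `F_p ∪ {∞}` (with `none` the `∞`-column). -/
def PaleyETF (p : ℕ) : Matrix (Option (QRes p)) (Option (ZMod p)) ℂ :=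
  fun r c =>
    match r, c with
    | none, none => 1
    | none, some _ => ((1 / Real.sqrt p : ℝ) : ℂ)
    | some _, none => 0
    | some b, some a => ((Real.sqrt (2 / p) : ℝ) : ℂ) * addChar' p (b.1 * a)

/-- `(K, δ)`-restricted isometry property for a complex matrix: for every vector `x`
with at most `K` nonzero entries, `(1-δ)‖x‖² ≤ ‖Φx‖² ≤ (1+δ)‖x‖²`. -/
def HasRIP {M N : Type*} [Fintype M] [Fintype N] (Φ : Matrix M N ℂ) (K δ : ℝ) : Prop :=
  ∀ x : N → ℂ, ((Finset.univ.filter fun n => x n ≠ 0).card : ℝ) ≤ K →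
    (1 - δ) * ∑ n, ‖x n‖ ^ 2 ≤ ∑ m, ‖∑ n, Φ m n * x n‖ ^ 2 ∧
      ∑ m, ‖∑ n, Φ m n * x n‖ ^ 2 ≤ (1 + δ) * ∑ n, ‖x n‖ ^ 2

/-- The Paley graph extractor: `Ext_p(x,y) = 1` if `x = y`, and `(χ(x−y)+1)/2` otherwise
(which is `1` iff `x − y` is a nonzero square, `0` otherwise). -/
def paleyExt (p : ℕ) (x y : ZMod p) : ℕ :=
  if x = y then 1 else if IsSquare (x - y) then 1 else 0

/-- Indicator vector of `U ⊆ F_p` with respect to the column indexing of the Paley ETF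
(entry `0` in the `∞` coordinate). -/
def indic (p : ℕ) (U : Finset (ZMod p)) : Option (ZMod p) → ℂ :=
  fun c => match c with
  | none => 0
  | some a => if a ∈ U then 1 else 0

section helpers
variable (p : ℕ) [Fact p.Prime]

lemma prime_pos : 0 < p := (Fact.out : p.Prime).pos

omit [Fact p.Prime] in
lemma zeta_pow (x : ZMod p) :
    addChar' p x = Complex.exp (2 * Real.pi * Complex.I / p) ^ x.val := by
  rw [← Complex.exp_nat_mul, addChar']
  ring_nf

lemma zeta_pow_p : Complex.exp (2 * Real.pi * Complex.I / p) ^ p = 1 :=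
  ((Complex.isPrimitiveRoot_exp p (prime_pos p).ne').pow_eq_one)

lemma zeta_pow_mod (a : ℕ) :
    Complex.exp (2 * Real.pi * Complex.I / p) ^ a
      = Complex.exp (2 * Real.pi * Complex.I / p) ^ (a % p) := by
  conv_lhs => rw [← Nat.mod_add_div a p]
  rw [pow_add, pow_mul, zeta_pow_p, one_pow, mul_one]

lemma addChar'_add (x y : ZMod p) :
    addChar' p (x + y) = addChar' p x * addChar' p y := by
  haveI : NeZero p := ⟨(prime_pos p).ne'⟩
  rw [zeta_pow, zeta_pow, zeta_pow, ← pow_add, ZMod.val_add, ← zeta_pow_mod]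

lemma addChar'_zero : addChar' p 0 = 1 := by
  haveI : NeZero p := ⟨(prime_pos p).ne'⟩
  simp [addChar']

lemma conj_addChar' (x : ZMod p) :
    (starRingEnd ℂ) (addChar' p x) = addChar' p (-x) := by
  have h := addChar'_add p x (-x)
  rw [add_neg_cancel, addChar'_zero] at h
  have h2 : (starRingEnd ℂ) (addChar' p x) * addChar' p x = 1 := by
    rw [addChar', ← Complex.exp_conj, ← Complex.exp_add]
    rw [← Complex.exp_zero]
    congr 1
    have : (starRingEnd ℂ) (2 * ↑Real.pi * Complex.I * ↑(x.val) / ↑p)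
        = -(2 * ↑Real.pi * Complex.I * ↑(x.val) / ↑p) := by
      simp only [map_div₀, map_mul, Complex.conj_I, Complex.conj_natCast,
        Complex.conj_ofReal, map_ofNat]
      ring
    rw [this]; ring
  have hne : addChar' p x ≠ 0 := by rw [addChar']; exact Complex.exp_ne_zero _
  have h3 : (starRingEnd ℂ) (addChar' p x) * addChar' p x
      = addChar' p (-x) * addChar' p x := by rw [h2, mul_comm (addChar' p (-x))]; exact h
  exact mul_right_cancel₀ hne h3

lemma sum_addChar' : ∑ a : ZMod p, addChar' p a = 0 := by
  haveI : NeZero p := ⟨(prime_pos p).ne'⟩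
  have h1 : ∑ a : ZMod p, addChar' p a
      = ∑ i ∈ Finset.range p, Complex.exp (2 * Real.pi * Complex.I / p) ^ i := by
    refine Finset.sum_nbij' (fun a => a.val) (fun i => (i : ZMod p)) ?_ ?_ ?_ ?_ ?_
    · intro a _; exact Finset.mem_range.2 (ZMod.val_lt a)
    · intro i _; exact Finset.mem_univ _
    · intro a _; simp [ZMod.natCast_val, ZMod.cast_id]
    · intro i hi; exact ZMod.val_cast_of_lt (Finset.mem_range.1 hi)
    · intro a _; exact zeta_pow p a
  rw [h1]
  exact (Complex.isPrimitiveRoot_exp p (prime_pos p).ne').geom_sum_eq_zero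
    (Fact.out : p.Prime).one_lt

lemma sum_addChar'_mul {c : ZMod p} (hc : c ≠ 0) :
    ∑ a : ZMod p, addChar' p (c * a) = 0 := by
  rw [Fintype.sum_bijective (fun a => c * a) (mulLeft_bijective₀ c hc)
    (fun a => addChar' p (c * a)) (addChar' p) (fun a => rfl)]
  exact sum_addChar' p

end helpers

/-- **The Paley ETF is a tight frame with frame constant 2:** `Φ_p · Φ_p* = 2·I`. -/
theorem paley_tight_frame (p : ℕ) [Fact p.Prime] (hp4 : p % 4 = 1) :
    PaleyETF p * (PaleyETF p).conjTranspose = (2 : ℂ) • (1 : Matrix (Option (QRes p)) (Option (QRes p)) ℂ) := by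
  have hp0 : (0:ℝ) < p := by exact_mod_cast prime_pos p
  have hpR : (p:ℝ) ≠ 0 := ne_of_gt hp0
  have hpC : (p:ℂ) ≠ 0 := by exact_mod_cast (prime_pos p).ne'
  have hsq2 : ((Real.sqrt (2 / p) : ℝ) : ℂ) * ((Real.sqrt (2 / p) : ℝ) : ℂ) = ((2 / p : ℝ) : ℂ) := by
    rw [← Complex.ofReal_mul, Real.mul_self_sqrt (by positivity)]
  ext r r'
  rw [Matrix.mul_apply, Fintype.sum_option]
  simp only [Matrix.conjTranspose_apply, Matrix.smul_apply, Matrix.one_apply]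
  match r, r' with
  | none, none =>
    simp only [PaleyETF, reduceCtorEq, if_pos rfl, star_one, mul_one, Complex.star_def,
      Complex.conj_ofReal]
    have hterm : ∀ a : ZMod p, ((1 / Real.sqrt p : ℝ) : ℂ) * ((1 / Real.sqrt p : ℝ) : ℂ)
        = ((1 / p : ℝ) : ℂ) := by
      intro a
      rw [← Complex.ofReal_mul]
      congr 1
      rw [div_mul_div_comm, one_mul, Real.mul_self_sqrt hp0.le]
    rw [Finset.sum_congr rfl (fun a _ => hterm a), Finset.sum_const, Finset.card_univ,
      ZMod.card, nsmul_eq_mul]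
    push_cast
    field_simp
    ring
  | none, some b' =>
    simp only [PaleyETF, reduceCtorEq, star_zero, mul_zero, smul_zero]
    have hterm : ∀ a : ZMod p,
        ((1 / Real.sqrt p : ℝ) : ℂ) *
          star (((Real.sqrt (2 / p) : ℝ) : ℂ) * addChar' p (b'.1 * a))
        = (((1 / Real.sqrt p : ℝ) : ℂ) * ((Real.sqrt (2 / p) : ℝ) : ℂ))
            * addChar' p ((-b'.1) * a) := by
      intro a
      rw [star_mul', Complex.star_def, Complex.conj_ofReal, conj_addChar', neg_mul]
      ring
    rw [Finset.sum_congr rfl (fun a _ => hterm a), ← Finset.mul_sum,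
      sum_addChar'_mul p (neg_ne_zero.2 b'.2.1), mul_zero, zero_add]
    simp
  | some b, none =>
    simp only [PaleyETF, reduceCtorEq, star_one, zero_mul, smul_zero]
    have hterm : ∀ a : ZMod p,
        ((Real.sqrt (2 / p) : ℝ) : ℂ) * addChar' p (b.1 * a) * star ((1 / Real.sqrt p : ℝ) : ℂ)
        = (((Real.sqrt (2 / p) : ℝ) : ℂ) * ((1 / Real.sqrt p : ℝ) : ℂ)) * addChar' p (b.1 * a) := by
      intro a
      rw [Complex.star_def, Complex.conj_ofReal]
      ring
    rw [Finset.sum_congr rfl (fun a _ => hterm a), ← Finset.mul_sum,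
      sum_addChar'_mul p b.2.1, mul_zero, zero_add]
    simp
  | some b, some b' =>
    simp only [PaleyETF, star_zero, mul_zero, Option.some.injEq]
    have hterm : ∀ a : ZMod p,
        ((Real.sqrt (2 / p) : ℝ) : ℂ) * addChar' p (b.1 * a) *
          star (((Real.sqrt (2 / p) : ℝ) : ℂ) * addChar' p (b'.1 * a))
        = ((2 / p : ℝ) : ℂ) * addChar' p ((b.1 - b'.1) * a) := by
      intro a
      rw [star_mul', Complex.star_def, Complex.conj_ofReal, conj_addChar']
      have : addChar' p (b.1 * a) * addChar' p (-(b'.1 * a))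
          = addChar' p ((b.1 - b'.1) * a) := by
        rw [← addChar'_add]
        congr 1
        ring
      calc ((Real.sqrt (2 / p) : ℝ) : ℂ) * addChar' p (b.1 * a) *
            (((Real.sqrt (2 / p) : ℝ) : ℂ) * addChar' p (-(b'.1 * a)))
          = (((Real.sqrt (2 / p) : ℝ) : ℂ) * ((Real.sqrt (2 / p) : ℝ) : ℂ)) *
            (addChar' p (b.1 * a) * addChar' p (-(b'.1 * a))) := by ring
        _ = ((2 / p : ℝ) : ℂ) * addChar' p ((b.1 - b'.1) * a) := by rw [hsq2, this]
    rw [Finset.sum_congr rfl (fun a _ => hterm a), ← Finset.mul_sum, zero_add]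
    by_cases hbb : b = b'
    · subst hbb
      simp only [if_pos rfl, sub_self]
      have : ∀ a : ZMod p, addChar' p ((0 : ZMod p) * a) = 1 := by
        intro a; rw [zero_mul, addChar'_zero]
      rw [Finset.sum_congr rfl (fun a _ => this a), Finset.sum_const, Finset.card_univ,
        ZMod.card, nsmul_eq_mul, mul_one]
      simp only [if_true, smul_eq_mul, mul_one]
      push_cast
      field_simp
    · rw [if_neg hbb, sum_addChar'_mul p (sub_ne_zero.2 (fun h => hbb (Subtype.ext h))),
        mul_zero, smul_zero]
end
end

section
/- Let p ≡ 1 (mod 4) be a prime. Then every column of the Paley ETF Φ_p has unit ℓ₂ norm, and any two distinct columns φ, φ' of Φ_p (including the column indexed by ∞) satisfy |⟨φ, φ'⟩| = 1/√p, where ⟨u, v⟩ = ∑_k u_k·conj(v_k); that is, the columns of Φ_p are equiangular unit vectors. -/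
open scoped Classical
open Finset

noncomputable section

/-
For finite columns `a, a'` the Gram entry is `(1 + 2 ∑_{b ∈ Q_p} ψ(b(a - a'))) / p`. Since
`1 + χ(x)` equals `2` on nonzero squares, `1` at `0` and `0` on nonsquares, the numerator is
`∑_x (1 + χ(x)) ψ(x d)` with `d = a - a'`: for `d = 0` this is `p` (as `∑ χ = 0`), and for `d ≠ 0`
it is `χ(d) g` with `g` the quadratic Gauss sum, of modulus `√p`. The `∞`-column meets the finite
columns only in row `0`, where its entry is `1`.
-/

section QuadraticSums

variable {F : Type*} [Field F] [Fintype F]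

theorem norm_gaussSum_eq_sqrt_card {χ : MulChar F ℂ} (hχ : χ ≠ 1) {ψ : AddChar F ℂ}
    (hψ : ψ.IsPrimitive) : ‖gaussSum χ ψ‖ = √(Fintype.card F) := by
  have h := gaussSum_mul_gaussSum_eq_card hχ hψ
  rw [← star_gaussSum_eq, ← starRingEnd_apply, Complex.mul_conj'] at h
  have h' : ‖gaussSum χ ψ‖ ^ 2 = Fintype.card F := by exact_mod_cast h
  rw [← h', Real.sqrt_sq (norm_nonneg _)]

variable [DecidableEq F]

theorem sum_one_add_quadraticChar_mul {R : Type*} [CommRing R] (f : F → R) :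
    ∑ x, (1 + (quadraticChar F x : R)) * f x
      = f 0 + 2 * ∑ b : {b : F // b ≠ 0 ∧ IsSquare b}, f b := by
  symm
  rw [← Finset.sum_subtype (univ.filter fun b : F => b ≠ 0 ∧ IsSquare b) (by simp),
    Finset.sum_filter, Finset.mul_sum, ← Fintype.sum_ite_eq' (0 : F) f, ← sum_add_distrib]
  refine Fintype.sum_congr _ _ fun x => ?_
  rcases eq_or_ne x 0 with rfl | hx
  · simp
  by_cases hsq : IsSquare x
  · simp [hx, hsq, (quadraticChar_one_iff_isSquare hx).mpr hsq]; ring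
  · simp [hx, hsq, quadraticChar_neg_one_iff_not_isSquare.mpr hsq]

theorem one_add_two_mul_card_nonzero_squares (hF : ringChar F ≠ 2) :
    1 + 2 * Fintype.card {b : F // b ≠ 0 ∧ IsSquare b} = Fintype.card F := by
  have h := (sum_one_add_quadraticChar_mul (R := ℤ) (F := F) 1).symm
  simp only [Pi.one_apply, mul_one, sum_add_distrib, sum_const, card_univ, nsmul_eq_mul,
    Int.cast_id, quadraticChar_sum_zero hF, add_zero] at h
  exact_mod_cast h

theorem one_add_two_mul_sum_nonzero_squares_addChar {R : Type*} [CommRing R] [IsDomain R]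
    {ψ : AddChar F R} (hψ : ψ.IsPrimitive) {d : F} (hd : d ≠ 0) :
    1 + 2 * ∑ b : {b : F // b ≠ 0 ∧ IsSquare b}, ψ (b * d)
      = ((quadraticChar F).ringHomComp (Int.castRingHom R)) d
          * gaussSum ((quadraticChar F).ringHomComp (Int.castRingHom R)) ψ := by
  set χ := (quadraticChar F).ringHomComp (Int.castRingHom R)
  have hχ : χ⁻¹ = χ := ((quadraticChar_isQuadratic F).comp _).inv
  calc 1 + 2 * ∑ b : {b : F // b ≠ 0 ∧ IsSquare b}, ψ (b * d)
      = ∑ x, ψ (x * d) + ∑ x, χ x * ψ (x * d) := by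
        simpa [add_mul, sum_add_distrib, χ] using
          (sum_one_add_quadraticChar_mul fun x => ψ (x * d)).symm
    _ = gaussSum χ (ψ.mulShift (Units.mk0 d hd)) := by
        simp [AddChar.sum_mulShift d hψ, hd, gaussSum, χ, mul_comm d]
    _ = χ d * gaussSum χ ψ := by rw [gaussSum_mulShift_eq, hχ, Units.val_mk0]

theorem norm_quadraticChar_ringHomComp {d : F} (hd : d ≠ 0) :
    ‖(quadraticChar F).ringHomComp (Int.castRingHom ℂ) d‖ = 1 := by
  rcases quadraticChar_dichotomy hd with h | h <;> simp [h]

end QuadraticSums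

namespace PaleyETF

open ZMod (stdAddChar)

variable {p : ℕ} [Fact p.Prime]

theorem addChar'_eq_stdAddChar (x : ZMod p) : addChar' p x = stdAddChar x := by
  rw [ZMod.stdAddChar_apply, ZMod.toCircle_apply, addChar']

theorem inner_none_none :
    ∑ r, PaleyETF p r none * starRingEnd ℂ (PaleyETF p r none) = 1 := by
  simp [Fintype.sum_option, PaleyETF]

theorem inner_none_some (a : ZMod p) :
    ∑ r, PaleyETF p r none * starRingEnd ℂ (PaleyETF p r (some a)) = ((1 / √p : ℝ) : ℂ) := by
  simp [Fintype.sum_option, PaleyETF]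

theorem inner_some_none (a : ZMod p) :
    ∑ r, PaleyETF p r (some a) * starRingEnd ℂ (PaleyETF p r none) = ((1 / √p : ℝ) : ℂ) := by
  simp [Fintype.sum_option, PaleyETF]

theorem inner_some_some (a a' : ZMod p) :
    ∑ r, PaleyETF p r (some a) * starRingEnd ℂ (PaleyETF p r (some a'))
      = (1 + 2 * ∑ b : QRes p, stdAddChar (b.1 * (a - a'))) / p := by
  have hp : (0 : ℝ) < p := by exact_mod_cast (Fact.out : p.Prime).pos
  have hentry (b : QRes p) : PaleyETF p (some b) (some a)
      * starRingEnd ℂ (PaleyETF p (some b) (some a')) = 2 / p * stdAddChar (b.1 * (a - a')) := by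
    simp only [PaleyETF, addChar'_eq_stdAddChar, map_mul, Complex.conj_ofReal,
      ← AddChar.map_neg_eq_conj]
    rw [mul_sub, sub_eq_add_neg, AddChar.map_add_eq_mul, mul_mul_mul_comm,
      ← Complex.ofReal_mul, Real.mul_self_sqrt (by positivity)]
    push_cast; rfl
  rw [Fintype.sum_option, Finset.sum_congr rfl fun b _ => hentry b, ← Finset.mul_sum]
  simp only [PaleyETF, Complex.conj_ofReal]
  rw [← Complex.ofReal_mul, div_mul_div_comm, one_mul, Real.mul_self_sqrt hp.le]
  push_cast
  ring

theorem sum_norm_sq_col_eq_one (hp : p ≠ 2) (c : Option (ZMod p)) :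
    ∑ r, ‖PaleyETF p r c‖ ^ 2 = 1 := by
  suffices ∑ r, PaleyETF p r c * starRingEnd ℂ (PaleyETF p r c) = 1 by
    simp_rw [Complex.mul_conj'] at this
    exact_mod_cast this
  cases c with
  | none => exact inner_none_none
  | some a =>
    have hcard :=
      one_add_two_mul_card_nonzero_squares (F := ZMod p) (by rwa [ZMod.ringChar_zmod_n])
    have hp0 : (p : ℂ) ≠ 0 := by exact_mod_cast (Fact.out : p.Prime).ne_zero
    rw [ZMod.card] at hcard
    simp only [inner_some_some, sub_self, mul_zero, AddChar.map_zero_eq_one, sum_const,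
      card_univ, nsmul_eq_mul, mul_one, div_eq_one_iff_eq hp0]
    exact_mod_cast hcard

theorem norm_inner_col_of_ne (hp : p ≠ 2) {c c' : Option (ZMod p)} (h : c ≠ c') :
    ‖∑ r, PaleyETF p r c * starRingEnd ℂ (PaleyETF p r c')‖ = 1 / √p := by
  rcases c with _ | a <;> rcases c' with _ | a'
  · exact absurd rfl h
  · rw [inner_none_some, Complex.norm_real, Real.norm_of_nonneg (by positivity)]
  · rw [inner_some_none, Complex.norm_real, Real.norm_of_nonneg (by positivity)]
  · have hd : a - a' ≠ 0 := sub_ne_zero.mpr (by simpa using h)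
    have hχ : (quadraticChar (ZMod p)).ringHomComp (Int.castRingHom ℂ) ≠ 1 :=
      (MulChar.ringHomComp_ne_one_iff (RingHom.injective_int _)).mpr
        (quadraticChar_ne_one (by rwa [ZMod.ringChar_zmod_n]))
    rw [inner_some_some, one_add_two_mul_sum_nonzero_squares_addChar
        (ZMod.isPrimitive_stdAddChar p) hd, norm_div, norm_mul,
      norm_quadraticChar_ringHomComp hd, norm_gaussSum_eq_sqrt_card hχ
        (ZMod.isPrimitive_stdAddChar p), ZMod.card, Complex.norm_natCast, one_mul,
      Real.sqrt_div_self']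

end PaleyETF

/-- **The columns of the Paley ETF are equiangular unit vectors:** every column has unit
`ℓ₂` norm, and any two distinct columns `φ, φ'` (including the `∞`-column) satisfy
`|⟨φ, φ'⟩| = 1/√p`, where `⟨u, v⟩ = ∑_k u_k · conj(v_k)`. -/
theorem paley_equiangular (p : ℕ) [Fact p.Prime] (hp4 : p % 4 = 1) :
    (∀ c : Option (ZMod p), ∑ r : Option (QRes p), ‖PaleyETF p r c‖ ^ 2 = 1) ∧
      (∀ c c' : Option (ZMod p), c ≠ c' →
        ‖(∑ r : Option (QRes p),
            PaleyETF p r c * starRingEnd ℂ (PaleyETF p r c'))‖ = 1 / Real.sqrt p) := by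
  have hp : p ≠ 2 := by omega
  exact ⟨PaleyETF.sum_norm_sq_col_eq_one hp, fun _ _ => PaleyETF.norm_inner_col_of_ne hp⟩
end
end

section
/- Let p ≡ 1 (mod 4) be a prime, K ≥ 1 and δ ≥ 0, and suppose the Paley ETF Φ_p has the (K, δ)-RIP. Then for every subset U ⊆ F_p with |U| ≤ K, one has |∑_{u, v ∈ U} χ(u − v)| ≤ δ·√p·|U|. -/
/-!
Twice the indicator of the nonzero squares is `χ + 1 - 𝟙₀`, so for the quadratic Gauss sum `g`
one has `2 ∑_{b ∈ Q_p} ψ(b t) = χ(t) g + p·[t = 0] - 1`. Expanding `‖Φ_p 1_U‖²` with this gives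
`‖Φ_p 1_U‖² = |U| + g T / p` with `T = ∑_{u,v ∈ U} χ(u - v)`. Since `|g| = √p`, the RIP estimate
`|‖Φ_p 1_U‖² - |U|| ≤ δ |U|` is exactly `|T| ≤ δ √p |U|`.
-/

open scoped Classical
open Finset

noncomputable section

section CharacterSums

variable {F R : Type*} [Field F] [Fintype F] [CommRing R]

theorem MulChar.IsQuadratic.sum_mul_addChar_mul [IsDomain R] {χ : MulChar F R} (hχ : χ.IsQuadratic)
    (hχ₁ : χ ≠ 1) (ψ : AddChar F R) (t : F) :
    ∑ b, χ b * ψ (b * t) = χ t * gaussSum χ ψ := by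
  rcases eq_or_ne t 0 with rfl | ht
  · simp [MulChar.sum_eq_zero_of_ne_one hχ₁]
  · have h := gaussSum_mulShift_eq χ ψ (Units.mk0 t ht)
    rw [hχ.inv, Units.val_mk0] at h
    simpa [gaussSum, AddChar.mulShift_apply, mul_comm] using h

variable [DecidableEq F]

theorem quadraticChar_ringHomComp_ne_one [CharZero R] (hF : ringChar F ≠ 2) :
    (quadraticChar F).ringHomComp (Int.castRingHom R) ≠ 1 :=
  (MulChar.ringHomComp_ne_one_iff Int.cast_injective).mpr (quadraticChar_ne_one hF)

theorem two_mul_sum_isSquare_addChar_mul [IsDomain R] [CharZero R] (hF : ringChar F ≠ 2)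
    {ψ : AddChar F R} (hψ : ψ.IsPrimitive) (t : F) :
    2 * ∑ b ∈ univ.filter (fun b : F => b ≠ 0 ∧ IsSquare b), ψ (b * t)
      = (quadraticChar F).ringHomComp (Int.castRingHom R) t
          * gaussSum ((quadraticChar F).ringHomComp (Int.castRingHom R)) ψ
        + (if t = 0 then (Fintype.card F : R) else 0) - 1 := by
  have hχ := (quadraticChar_isQuadratic F).comp (Int.castRingHom R)
  have hindicator (b : F) : (if b ≠ 0 ∧ IsSquare b then 2 * ψ (b * t) else 0)
      = (quadraticChar F).ringHomComp (Int.castRingHom R) b * ψ (b * t) + ψ (b * t)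
        - if b = 0 then ψ (b * t) else 0 := by
    by_cases hb : b = 0 <;> by_cases hs : IsSquare b <;>
      simp [quadraticChar_apply, quadraticCharFun, hb, hs, two_mul]
  rw [mul_sum, sum_filter, sum_congr rfl fun b _ => hindicator b, sum_sub_distrib,
    sum_add_distrib, hχ.sum_mul_addChar_mul (quadraticChar_ringHomComp_ne_one hF),
    AddChar.sum_mulShift t hψ]
  simp

theorem norm_gaussSum_quadraticChar (hF : ringChar F ≠ 2) {ψ : AddChar F ℂ}
    (hψ : ψ.IsPrimitive) :
    ‖gaussSum ((quadraticChar F).ringHomComp (Int.castRingHom ℂ)) ψ‖ = √(Fintype.card F) := by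
  have hsq := congrArg norm <| gaussSum_sq (quadraticChar_ringHomComp_ne_one hF)
    ((quadraticChar_isQuadratic F).comp (Int.castRingHom ℂ)) hψ
  have hunit : ‖(quadraticChar F).ringHomComp (Int.castRingHom ℂ) (-1)‖ = 1 := by
    rcases quadraticChar_dichotomy (neg_ne_zero.mpr (one_ne_zero (α := F))) with h | h <;>
      simp [MulChar.ringHomComp_apply, h]
  rw [norm_pow, norm_mul, hunit, one_mul, Complex.norm_natCast] at hsq
  rw [← hsq, Real.sqrt_sq (norm_nonneg _)]

end CharacterSums

theorem AddChar.ofReal_norm_sum_sq {G : Type*} [AddCommGroup G] [Finite G]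
    (ψ : AddChar G ℂ) (U : Finset G) :
    ((‖∑ a ∈ U, ψ a‖ : ℝ) : ℂ) ^ 2 = ∑ u ∈ U, ∑ v ∈ U, ψ (u - v) := by
  rw [← Complex.mul_conj', map_sum, sum_mul_sum]
  simp_rw [sub_eq_add_neg, AddChar.map_add_eq_mul, AddChar.map_neg_eq_conj]

theorem HasRIP.abs_sum_sq_norm_mul_sub_le {M N : Type*} [Fintype M] [Fintype N]
    {Φ : Matrix M N ℂ} {K δ : ℝ} (h : HasRIP Φ K δ) (x : N → ℂ)
    (hx : (#(univ.filter fun n => x n ≠ 0) : ℝ) ≤ K) :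
    |∑ m, ‖∑ n, Φ m n * x n‖ ^ 2 - ∑ n, ‖x n‖ ^ 2| ≤ δ * ∑ n, ‖x n‖ ^ 2 := by
  obtain ⟨hlower, hupper⟩ := h x hx
  rw [abs_le]
  constructor <;> linarith

section Paley

variable {p : ℕ} [Fact p.Prime]

theorem addChar'_eq_stdAddChar (x : ZMod p) : addChar' p x = ZMod.stdAddChar x := by
  rw [ZMod.stdAddChar_apply, ZMod.toCircle_apply, addChar']

theorem quadChar_eq_quadraticChar (x : ZMod p) : quadChar p x = quadraticChar (ZMod p) x := by
  rw [quadraticChar_apply, quadraticCharFun, quadChar]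
  congr

variable (U : Finset (ZMod p))

theorem card_filter_indic_ne_zero : #(univ.filter fun n => indic p U n ≠ 0) = #U := by
  have : (univ.filter fun n => indic p U n ≠ 0) = U.map Function.Embedding.some := by
    ext (_ | a) <;> simp only [mem_filter] <;> simp [indic]
  rw [this, card_map]

theorem sum_sq_norm_indic : ∑ n, ‖indic p U n‖ ^ 2 = #U := by
  simp [Fintype.sum_option, indic, apply_ite]

theorem sum_PaleyETF_none_mul_indic :
    ∑ n, PaleyETF p none n * indic p U n = ((#U / √p : ℝ) : ℂ) := by
  simp [Fintype.sum_option, PaleyETF, indic, div_eq_mul_inv]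

theorem sum_PaleyETF_some_mul_indic (b : QRes p) :
    ∑ n, PaleyETF p (some b) n * indic p U n
      = ((√(2 / p) : ℝ) : ℂ) * ∑ a ∈ U, ZMod.stdAddChar (b.1 * a) := by
  simp [Fintype.sum_option, PaleyETF, indic, mul_sum, addChar'_eq_stdAddChar]

variable {U}

theorem two_mul_sum_QRes_sq_norm_sum_stdAddChar (hp : p ≠ 2) :
    2 * ∑ b : QRes p, ((‖∑ a ∈ U, ZMod.stdAddChar (b.1 * a)‖ : ℝ) : ℂ) ^ 2
      = gaussSum ((quadraticChar (ZMod p)).ringHomComp (Int.castRingHom ℂ)) ZMod.stdAddChar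
          * ∑ u ∈ U, ∑ v ∈ U, (quadChar p (u - v) : ℂ) + p * #U - #U ^ 2 := by
  set χ := (quadraticChar (ZMod p)).ringHomComp (Int.castRingHom ℂ)
  have hchar : ringChar (ZMod p) ≠ 2 := by rwa [ZMod.ringChar_zmod_n]
  have hsq (b : ZMod p) : ((‖∑ a ∈ U, ZMod.stdAddChar (b * a)‖ : ℝ) : ℂ) ^ 2
      = ∑ u ∈ U, ∑ v ∈ U, ZMod.stdAddChar (b * (u - v)) :=
    AddChar.ofReal_norm_sum_sq (ZMod.stdAddChar.mulShift b) U
  calc 2 * ∑ b : QRes p, ((‖∑ a ∈ U, ZMod.stdAddChar (b.1 * a)‖ : ℝ) : ℂ) ^ 2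
      = ∑ u ∈ U, ∑ v ∈ U, 2 * ∑ b ∈ univ.filter (fun b : ZMod p => b ≠ 0 ∧ IsSquare b),
          ZMod.stdAddChar (b * (u - v)) := by
        rw [← sum_subtype (univ.filter fun b : ZMod p => b ≠ 0 ∧ IsSquare b) (by simp)
          (fun b => ((‖∑ a ∈ U, ZMod.stdAddChar (b * a)‖ : ℝ) : ℂ) ^ 2)]
        simp_rw [hsq, mul_sum]
        rw [sum_comm]
        exact sum_congr rfl fun u _ => sum_comm
    _ = ∑ u ∈ U, ∑ v ∈ U, (χ (u - v) * gaussSum χ ZMod.stdAddChar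
          + (if u = v then (p : ℂ) else 0) - 1) := by
        simp_rw [two_mul_sum_isSquare_addChar_mul hchar (ZMod.isPrimitive_stdAddChar p),
          sub_eq_zero, ZMod.card]
        rfl
    _ = _ := by
        simp [sum_add_distrib, sum_sub_distrib, ← sum_mul, quadChar_eq_quadraticChar, χ]
        ring

theorem ofReal_sum_sq_norm_PaleyETF_mul_indic (hp : p ≠ 2) :
    ((∑ m, ‖∑ n, PaleyETF p m n * indic p U n‖ ^ 2 : ℝ) : ℂ)
      = #U + gaussSum ((quadraticChar (ZMod p)).ringHomComp (Int.castRingHom ℂ)) ZMod.stdAddChar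
          * (∑ u ∈ U, ∑ v ∈ U, (quadChar p (u - v) : ℂ)) / p := by
  have hp0 : (0 : ℝ) < p := Nat.cast_pos.mpr (Fact.out : p.Prime).pos
  have hp0' : (p : ℂ) ≠ 0 := mod_cast hp0.ne'
  have hreal : ∑ m, ‖∑ n, PaleyETF p m n * indic p U n‖ ^ 2
      = #U ^ 2 / p + 2 / p * ∑ b : QRes p, ‖∑ a ∈ U, ZMod.stdAddChar (b.1 * a)‖ ^ 2 := by
    rw [Fintype.sum_option]
    simp only [sum_PaleyETF_none_mul_indic, sum_PaleyETF_some_mul_indic, norm_mul,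
      Complex.norm_real, Real.norm_eq_abs, mul_pow, sq_abs, div_pow, ← mul_sum,
      Real.sq_sqrt hp0.le, Real.sq_sqrt (div_nonneg zero_le_two hp0.le)]
  have hsquares := two_mul_sum_QRes_sq_norm_sum_stdAddChar (U := U) hp
  rw [hreal]
  push_cast
  field_simp
  linear_combination hsquares

theorem abs_sum_sq_norm_PaleyETF_mul_indic_sub_card (hp : p ≠ 2) :
    |∑ m, ‖∑ n, PaleyETF p m n * indic p U n‖ ^ 2 - #U|
      = |∑ u ∈ U, ∑ v ∈ U, (quadChar p (u - v) : ℝ)| / √p := by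
  have hchar : ringChar (ZMod p) ≠ 2 := by rwa [ZMod.ringChar_zmod_n]
  have hg := norm_gaussSum_quadraticChar hchar (ZMod.isPrimitive_stdAddChar p)
  rw [ZMod.card] at hg
  have henergy := ofReal_sum_sq_norm_PaleyETF_mul_indic (U := U) hp
  rw [← sub_eq_iff_eq_add'] at henergy
  have hT : ∑ u ∈ U, ∑ v ∈ U, (quadChar p (u - v) : ℂ)
      = ((∑ u ∈ U, ∑ v ∈ U, (quadChar p (u - v) : ℝ) : ℝ) : ℂ) := by
    push_cast
    rfl
  calc |∑ m, ‖∑ n, PaleyETF p m n * indic p U n‖ ^ 2 - #U|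
      = ‖((∑ m, ‖∑ n, PaleyETF p m n * indic p U n‖ ^ 2 - #U : ℝ) : ℂ)‖ :=
        (Complex.norm_real _).symm
    _ = √p * |∑ u ∈ U, ∑ v ∈ U, (quadChar p (u - v) : ℝ)| / p := by
        rw [Complex.ofReal_sub, Complex.ofReal_natCast, henergy, hT, norm_div, norm_mul, hg,
          Complex.norm_real, Real.norm_eq_abs, Complex.norm_natCast]
    _ = _ := by
        rw [mul_comm, mul_div_assoc, Real.sqrt_div_self', mul_one_div]

end Paley

theorem paley_rip_char_sum_general (p : ℕ) [Fact p.Prime] (hp4 : p % 4 = 1)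
    (K δ : ℝ)
    (hRIP : HasRIP (PaleyETF p) K δ)
    (U : Finset (ZMod p)) (hU : (U.card : ℝ) ≤ K) :
    |∑ u ∈ U, ∑ v ∈ U, (quadChar p (u - v) : ℝ)| ≤ δ * Real.sqrt p * (U.card : ℝ) := by
  have hp : p ≠ 2 := by omega
  have hsqrt : 0 < √(p : ℝ) := Real.sqrt_pos.mpr (Nat.cast_pos.mpr (Fact.out : p.Prime).pos)
  have hdev := hRIP.abs_sum_sq_norm_mul_sub_le (indic p U) (by rwa [card_filter_indic_ne_zero])
  rw [sum_sq_norm_indic, abs_sum_sq_norm_PaleyETF_mul_indic_sub_card hp,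
    div_le_iff₀ hsqrt] at hdev
  linarith

/-- **RIP implies a double character-sum bound (key lemma).**
If `Φ_p` has the `(K, δ)`-RIP, then for every `U ⊆ F_p` with `|U| ≤ K`,
`|∑_{u,v∈U} χ(u−v)| ≤ δ·√p·|U|`. -/
theorem paley_rip_char_sum (p : ℕ) [Fact p.Prime] (hp4 : p % 4 = 1)
    (K δ : ℝ) (hK : 1 ≤ K) (hδ : 0 ≤ δ)
    (hRIP : HasRIP (PaleyETF p) K δ)
    (U : Finset (ZMod p)) (hU : (U.card : ℝ) ≤ K) :
    |∑ u ∈ U, ∑ v ∈ U, (quadChar p (u - v) : ℝ)| ≤ δ * Real.sqrt p * (U.card : ℝ) :=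
  paley_rip_char_sum_general p hp4 K δ hRIP U hU
end
end
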